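/- arXiv:1611.01781 — 3 statements merged into one kernel-verified Lean document; each statement's English description precedes it below -/
import Mathlib

section
/- For all η ∈ ℝ and all σ ≥ 0 and all t > 0, one has (η + σ/2)² + 2√α_s·σ + t·σ ≥ W_rel(η); moreover for fixed η the infimum over σ ≥ 0 of (η + σ/2)² + 2√α_s·σ equals W_rel(η). -/
/-! Completing the square, `(η + σ/2)² + 2sσ = (η + σ/2 + 2s)² - 4s(s + η)` with `s = √α_s`,
shows that the energy is minimised over `σ ≥ 0` at `σ = 0` when `η ≥ -2s`, and at the
unconstrained minimiser `σ = -2η - 4s ≥ 0` otherwise. -/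

namespace WrinklingRelaxation

variable (s η : ℝ)

/-- The relaxed energy `W_rel`, with `s` standing for `√α_s`. -/
noncomputable def Wrel : ℝ :=
  if -2 * s ≤ η then η ^ 2 else -4 * s * (s + η)

def energies : Set ℝ :=
  {x : ℝ | ∃ σ : ℝ, 0 ≤ σ ∧ x = (η + σ / 2) ^ 2 + 2 * s * σ}

lemma energy_eq_sq_sub (σ : ℝ) :
    (η + σ / 2) ^ 2 + 2 * s * σ = (η + σ / 2 + 2 * s) ^ 2 - 4 * s * (s + η) := by
  ring

variable {s η}

lemma sq_le_energy {σ : ℝ} (hη : -2 * s ≤ η) (hσ : 0 ≤ σ) :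
    η ^ 2 ≤ (η + σ / 2) ^ 2 + 2 * s * σ := by
  nlinarith [sq_nonneg σ]

lemma linear_le_energy (σ : ℝ) : -4 * s * (s + η) ≤ (η + σ / 2) ^ 2 + 2 * s * σ := by
  rw [energy_eq_sq_sub]
  linarith [sq_nonneg (η + σ / 2 + 2 * s)]

lemma Wrel_le_energy {σ : ℝ} (hσ : 0 ≤ σ) :
    Wrel s η ≤ (η + σ / 2) ^ 2 + 2 * s * σ := by
  unfold Wrel
  split_ifs with hη
  · exact sq_le_energy hη hσ
  · exact linear_le_energy σ

lemma Wrel_mem_energies : Wrel s η ∈ energies s η := by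
  unfold Wrel
  split_ifs with hη
  · exact ⟨0, le_rfl, by ring⟩
  · exact ⟨-2 * η - 4 * s, by linarith, by ring⟩

lemma isLeast_energies_Wrel : IsLeast (energies s η) (Wrel s η) := by
  refine ⟨Wrel_mem_energies, ?_⟩
  rintro x ⟨σ, hσ, rfl⟩
  exact Wrel_le_energy hσ

end WrinklingRelaxation

open WrinklingRelaxation in
theorem Wrel_relaxation_general (αs : ℝ) (W : ℝ → ℝ)
    (hW : ∀ η : ℝ, W η = if -2 * Real.sqrt αs ≤ η then η ^ 2
      else -4 * Real.sqrt αs * (Real.sqrt αs + η)) :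
    (∀ η σ t : ℝ, 0 ≤ σ → 0 < t →
      W η ≤ (η + σ / 2) ^ 2 + 2 * Real.sqrt αs * σ + t * σ) ∧
    (∀ η : ℝ, IsGLB {x : ℝ | ∃ σ : ℝ, 0 ≤ σ ∧
      x = (η + σ / 2) ^ 2 + 2 * Real.sqrt αs * σ} (W η)) := by
  obtain rfl : W = Wrel (Real.sqrt αs) := funext hW
  refine ⟨fun η σ t hσ ht => ?_, fun η => isLeast_energies_Wrel.isGLB⟩
  linarith [Wrel_le_energy (s := Real.sqrt αs) (η := η) hσ, mul_nonneg ht.le hσ]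

theorem Wrel_relaxation (αs : ℝ) (hαs : 0 < αs) (W : ℝ → ℝ)
    (hW : ∀ η : ℝ, W η = if -2 * Real.sqrt αs ≤ η then η ^ 2
      else -4 * Real.sqrt αs * (Real.sqrt αs + η)) :
    (∀ η σ t : ℝ, 0 ≤ σ → 0 < t →
      W η ≤ (η + σ / 2) ^ 2 + 2 * Real.sqrt αs * σ + t * σ) ∧
    (∀ η : ℝ, IsGLB {x : ℝ | ∃ σ : ℝ, 0 ≤ σ ∧
      x = (η + σ / 2) ^ 2 + 2 * Real.sqrt αs * σ} (W η)) :=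
  Wrel_relaxation_general αs W hW
end

section
/- Let f : ℝ → ℝ be smooth and compactly supported. Then for every n ∈ ℕ there exists a constant C, depending only on n and the support of f, such that for all t ∈ (0,1) and all ζ ∈ ℝ, |t·Σ_{k∈ℤ} f(tk + ζ) - ∫_ℝ f| ≤ C·tⁿ·sup|f^{(n)}|. -/
open MeasureTheory Finset

/-- If `f` has support in `[-R,R]` and `c < -R < R < d`, the interval integral is the full one. -/
lemma rse_integral_eq {f : ℝ → ℝ} {R c d : ℝ} (hR0 : 0 < R)
    (hsub : Function.support f ⊆ Set.Icc (-R) R) (h1 : c < -R) (h2 : R < d) :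
    ∫ x in c..d, f x = ∫ x : ℝ, f x := by
  rw [intervalIntegral.integral_of_le (by linarith)]
  apply setIntegral_eq_integral_of_forall_compl_eq_zero
  intro x hx
  by_contra h
  have hm := hsub h
  simp only [Set.mem_Icc] at hm
  exact hx ⟨by linarith [hm.1], by linarith [hm.2]⟩

lemma rse_icc_image (a b : ℤ) :
    Finset.Icc a b = (Finset.range (b + 1 - a).toNat).image (fun i : ℕ => a + i) := by
  ext k
  simp only [Finset.mem_Icc, Finset.mem_image, Finset.mem_range]
  constructor
  · rintro ⟨h1, h2⟩; exact ⟨(k - a).toNat, by omega, by omega⟩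
  · rintro ⟨i, hi, rfl⟩; omega

lemma rse_sum_icc (a b : ℤ) (g : ℤ → ℝ) :
    ∑ k ∈ Finset.Icc a b, g k = ∑ i ∈ Finset.range (b + 1 - a).toNat, g (a + i) := by
  rw [rse_icc_image a b, Finset.sum_image]
  intro i _ j _ h
  have h' : a + (i : ℤ) = a + j := h
  omega

/-- Vanishing of terms outside the index window. -/
lemma rse_vanish {f : ℝ → ℝ} {R t ζ : ℝ} (hsub : Function.support f ⊆ Set.Icc (-R) R)
    (ht : 0 < t) {s : ℝ} (hs1 : ζ - t ≤ s) (hs2 : s ≤ ζ) {k : ℤ}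
    (hk : k ∉ Finset.Icc ⌈(-R - ζ) / t⌉ ⌊(R - ζ) / t + 1⌋) : f (t * k + s) = 0 := by
  by_contra h
  have hm := hsub h
  simp only [Set.mem_Icc] at hm
  apply hk
  rw [Finset.mem_Icc]
  constructor
  · rw [Int.ceil_le, div_le_iff₀ ht]
    nlinarith [hm.1]
  · rw [Int.le_floor, show (R - ζ) / t + 1 = (R - ζ + t) / t by field_simp, le_div_iff₀ ht]
    nlinarith [hm.2]

lemma rse_key (R : ℝ) (hR : 1 ≤ R) (n : ℕ) :
    ∀ f : ℝ → ℝ, ContDiff ℝ (⊤ : ℕ∞) f → tsupport f ⊆ Set.Icc (-R) R →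
    ∀ t ∈ Set.Ioo (0 : ℝ) 1, ∀ ζ : ℝ,
      |t * ∑' k : ℤ, f (t * k + ζ) - ∫ x : ℝ, f x| ≤
        (9 * R) * t ^ n * ⨆ x : ℝ, |iteratedDeriv n f x| := by
  induction n with
  | zero =>
    intro f hf hsub t ht ζ
    obtain ⟨ht0, ht1⟩ := ht
    have hsupp : Function.support f ⊆ Set.Icc (-R) R :=
      (subset_tsupport f).trans hsub
    have hcs : HasCompactSupport f :=
      isCompact_Icc.of_isClosed_subset (isClosed_tsupport f) hsub
    have hbdd : BddAbove (Set.range fun x => |f x|) := by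
      obtain ⟨C, hC⟩ := hcs.exists_bound_of_continuous hf.continuous
      exact ⟨C, by rintro y ⟨x, rfl⟩; exact hC x⟩
    set M := ⨆ x : ℝ, |f x| with hMdef
    have hM : ∀ x, |f x| ≤ M := fun x => le_ciSup hbdd x
    have hM0 : (0 : ℝ) ≤ M := le_trans (abs_nonneg _) (hM 0)
    set a : ℤ := ⌈(-R - ζ) / t⌉ with ha
    set b : ℤ := ⌊(R - ζ) / t + 1⌋ with hb
    set K := Finset.Icc a b with hK
    have htsum : ∑' k : ℤ, f (t * k + ζ) = ∑ k ∈ K, f (t * k + ζ) :=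
      tsum_eq_sum fun k hk => rse_vanish hsupp ht0 (by linarith) le_rfl hk
    -- cardinality bound
    have hcard : (K.card : ℝ) * t ≤ 2 * R + 2 * t := by
      rcases le_or_gt a b with hab | hab
      · have hcardK : (K.card : ℤ) = b + 1 - a := by
          rw [hK, Int.card_Icc]; omega
        have h1 : (a : ℝ) ≥ (-R - ζ) / t := Int.le_ceil _
        have h2 : (b : ℝ) ≤ (R - ζ) / t + 1 := Int.floor_le _
        have h3 : ((K.card : ℤ) : ℝ) = (b : ℝ) + 1 - a := by rw [hcardK]; push_cast; ring
        have h4 : ((K.card : ℤ) : ℝ) ≤ 2 * R / t + 2 := by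
          rw [h3]
          have : (-R - ζ) / t = (R - ζ) / t - 2 * R / t := by ring
          linarith [h1, h2, this ▸ h1]
        have := mul_le_mul_of_nonneg_right h4 ht0.le
        calc (K.card : ℝ) * t ≤ (2 * R / t + 2) * t := by push_cast at this ⊢; linarith
          _ = 2 * R + 2 * t := by field_simp
      · have : K = ∅ := by rw [hK]; exact Finset.Icc_eq_empty (by omega)
        rw [this]; simp; positivity
    have hsumb : |∑ k ∈ K, f (t * k + ζ)| ≤ (K.card : ℝ) * M := by
      calc |∑ k ∈ K, f (t * k + ζ)| ≤ ∑ k ∈ K, |f (t * k + ζ)| :=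
            Finset.abs_sum_le_sum_abs _ _
        _ ≤ ∑ _k ∈ K, M := Finset.sum_le_sum fun k _ => hM _
        _ = (K.card : ℝ) * M := by rw [Finset.sum_const, nsmul_eq_mul]
    have htS : |t * ∑' k : ℤ, f (t * k + ζ)| ≤ (2 * R + 2) * M := by
      rw [htsum, abs_mul, abs_of_pos ht0]
      calc t * |∑ k ∈ K, f (t * k + ζ)| ≤ t * ((K.card : ℝ) * M) := by
            exact mul_le_mul_of_nonneg_left hsumb ht0.le
        _ = ((K.card : ℝ) * t) * M := by ring
        _ ≤ (2 * R + 2 * t) * M := mul_le_mul_of_nonneg_right hcard hM0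
        _ ≤ (2 * R + 2) * M := by nlinarith
    have hint : |∫ x : ℝ, f x| ≤ (2 * R + 2) * M := by
      rw [← rse_integral_eq (by linarith) hsupp (show -R - 1 < -R by linarith) (show R < R + 1 by linarith)]
      have := intervalIntegral.norm_integral_le_of_norm_le_const
        (a := -R - 1) (b := R + 1) (C := M) (f := f) (fun x _ => hM x)
      rw [Real.norm_eq_abs] at this
      calc |∫ x in (-R - 1)..(R + 1), f x| ≤ M * |R + 1 - (-R - 1)| := this
        _ = (2 * R + 2) * M := by rw [abs_of_pos (by linarith)]; ring
    calc |t * ∑' k : ℤ, f (t * k + ζ) - ∫ x : ℝ, f x|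
        ≤ |t * ∑' k : ℤ, f (t * k + ζ)| + |∫ x : ℝ, f x| := abs_sub _ _
      _ ≤ (2 * R + 2) * M + (2 * R + 2) * M := by linarith
      _ ≤ 9 * R * 1 * M := by nlinarith
      _ = 9 * R * t ^ 0 * ⨆ x : ℝ, |iteratedDeriv 0 f x| := by
          simp [hMdef, iteratedDeriv_zero]
  | succ n ih =>
    intro f hf hsub t ht ζ
    obtain ⟨ht0, ht1⟩ := ht
    have hsupp : Function.support f ⊆ Set.Icc (-R) R := (subset_tsupport f).trans hsub
    have hfd : Differentiable ℝ f := (contDiff_infty_iff_deriv.mp hf).1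
    have hf' : ContDiff ℝ (⊤ : ℕ∞) (deriv f) := (contDiff_infty_iff_deriv.mp hf).2
    have hsub' : tsupport (deriv f) ⊆ Set.Icc (-R) R :=
      closure_minimal (support_deriv_subset.trans hsub) isClosed_Icc
    have hsupp' : Function.support (deriv f) ⊆ Set.Icc (-R) R :=
      (subset_tsupport _).trans hsub'
    have hIH := ih (deriv f) hf' hsub' t ⟨ht0, ht1⟩
    set B := 9 * R * t ^ n * ⨆ x : ℝ, |iteratedDeriv n (deriv f) x| with hBdef
    -- ∫ deriv f = 0
    have hzero : ∀ x : ℝ, x ∉ Set.Icc (-R) R → f x = 0 := by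
      intro x hx
      by_contra h
      exact hx (hsupp h)
    have hint0 : (∫ x : ℝ, deriv f x) = 0 := by
      rw [← rse_integral_eq (by linarith) hsupp' (show -R - 1 < -R by linarith) (show R < R + 1 by linarith)]
      rw [intervalIntegral.integral_deriv_eq_sub (fun x _ => (hfd x))
        ((hf'.continuous).intervalIntegrable _ _)]
      rw [hzero (R + 1) (by simp only [Set.mem_Icc]; intro h; linarith),
        hzero (-R - 1) (by simp only [Set.mem_Icc]; push_neg; intro h; linarith)]
      ring
    set a : ℤ := ⌈(-R - ζ) / t⌉ with ha
    set b : ℤ := ⌊(R - ζ) / t + 1⌋ with hb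
    set K := Finset.Icc a b with hK
    set G : ℝ → ℝ := fun u => t * ∑ k ∈ K, f (t * k + u) with hGdef
    -- derivative of G
    have hGd : ∀ u : ℝ, HasDerivAt G (t * ∑ k ∈ K, deriv f (t * k + u)) u := by
      intro u
      apply HasDerivAt.const_mul
      apply HasDerivAt.fun_sum
      intro k _
      have h1 : HasDerivAt (fun u : ℝ => t * k + u) 1 u := (hasDerivAt_id u).const_add _
      have h2 := ((hfd (t * k + u)).hasDerivAt).comp u h1
      rw [mul_one] at h2
      exact h2
    -- bound on the derivative of G on the window
    have hGb : ∀ u ∈ Set.Icc (ζ - t) ζ, ‖t * ∑ k ∈ K, deriv f (t * k + u)‖ ≤ B := by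
      intro u hu
      have h1 : ∑' k : ℤ, deriv f (t * k + u) = ∑ k ∈ K, deriv f (t * k + u) :=
        tsum_eq_sum fun k hk => rse_vanish hsupp' ht0 hu.1 hu.2 hk
      have := hIH u
      rw [hint0, sub_zero, h1] at this
      rw [Real.norm_eq_abs]
      exact this
    have hB0 : (0 : ℝ) ≤ B :=
      le_trans (norm_nonneg _) (hGb ζ ⟨by linarith, le_rfl⟩)
    -- increments of G
    have hGdiff : ∀ s ∈ Set.Icc (ζ - t) ζ, |G ζ - G s| ≤ B * t := by
      intro s hs
      have h := Convex.norm_image_sub_le_of_norm_hasDerivWithin_le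
        (f := G) (f' := fun u => t * ∑ k ∈ K, deriv f (t * k + u))
        (s := Set.Icc (ζ - t) ζ) (C := B)
        (fun x hx => (hGd x).hasDerivWithinAt) hGb (convex_Icc _ _)
        hs ⟨by linarith, le_rfl⟩
      rw [Real.norm_eq_abs, Real.norm_eq_abs] at h
      calc |G ζ - G s| ≤ B * |ζ - s| := h
        _ ≤ B * t := by
            apply mul_le_mul_of_nonneg_left _ hB0
            rw [abs_of_nonneg (by linarith [hs.2])]
            linarith [hs.1]
    -- integral identity for G
    have hGint : (∫ s in (ζ - t)..ζ, G s) = t * ∫ x : ℝ, f x := by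
      have hii : ∀ k : ℤ, IntervalIntegrable (fun s => f (t * k + s)) volume (ζ - t) ζ :=
        fun k => (hf.continuous.comp (continuous_const.add continuous_id)).intervalIntegrable _ _
      have h1 : (∫ s in (ζ - t)..ζ, G s)
          = t * ∑ k ∈ K, ∫ s in (ζ - t)..ζ, f (t * k + s) := by
        rw [hGdef]
        rw [intervalIntegral.integral_const_mul]
        congr 1
        exact intervalIntegral.integral_finset_sum fun k _ => hii k
      rw [h1]
      congr 1
      have h2 : ∀ k : ℤ, (∫ s in (ζ - t)..ζ, f (t * k + s))
          = ∫ x in (t * k + (ζ - t))..(t * k + ζ), f x :=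
        fun k => intervalIntegral.integral_comp_add_left f (t * k)
      simp_rw [h2]
      -- telescope
      set g : ℕ → ℝ := fun i => t * (a + i) + (ζ - t) with hg
      have h3 : ∑ k ∈ K, (∫ x in (t * k + (ζ - t))..(t * k + ζ), f x)
          = ∑ i ∈ Finset.range (b + 1 - a).toNat, ∫ x in g i..g (i + 1), f x := by
        rw [hK, rse_sum_icc]
        apply Finset.sum_congr rfl
        intro i _
        have e1 : t * (a + i : ℤ) + (ζ - t) = g i := by rw [hg]; push_cast; ring
        have e2 : t * (a + i : ℤ) + ζ = g (i + 1) := by rw [hg]; push_cast; ring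
        rw [e1, e2]
      rw [h3, intervalIntegral.sum_integral_adjacent_intervals
        (fun k _ => (hf.continuous).intervalIntegrable _ _)]
      have hleft : g 0 < -R := by
        have := Int.ceil_lt_add_one ((-R - ζ) / t)
        rw [← ha] at this
        have h4 : (a : ℝ) * t < (-R - ζ) / t * t + t := by nlinarith
        rw [div_mul_cancel₀ _ (ne_of_gt ht0)] at h4
        simp only [hg, Nat.cast_zero, add_zero]
        nlinarith
      rcases le_or_gt a b with hab | hab
      · have hright : R < g (b + 1 - a).toNat := by
          have h5 : (R - ζ) / t + 1 - 1 < (b : ℝ) := Int.sub_one_lt_floor _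
          have h6 : ((b + 1 - a).toNat : ℝ) = (b : ℝ) + 1 - a := by
            have : ((b + 1 - a).toNat : ℤ) = b + 1 - a := Int.toNat_of_nonneg (by omega)
            exact_mod_cast congrArg (Int.cast : ℤ → ℝ) this
          simp only [hg, h6]
          have h7 : (R - ζ) / t * t < (b : ℝ) * t := by nlinarith
          rw [div_mul_cancel₀ _ (ne_of_gt ht0)] at h7
          nlinarith
        exact rse_integral_eq (by linarith) hsupp hleft hright
      · -- empty window: impossible since the window has length > 2
        exfalso
        have h1 : (a : ℝ) < (-R - ζ) / t + 1 := Int.ceil_lt_add_one _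
        have h2 : (R - ζ) / t < (b : ℝ) := by
          have := Int.sub_one_lt_floor ((R - ζ) / t + 1)
          linarith
        have h3 : (b : ℝ) < a := by exact_mod_cast hab
        have h4 : (-R - ζ) / t ≤ (R - ζ) / t :=
          (div_le_div_iff_of_pos_right ht0).mpr (by linarith)
        have h5' : b + 1 ≤ a := hab
        have h5 : (b : ℝ) + 1 ≤ (a : ℝ) := by exact_mod_cast h5'
        linarith
    -- tsum at ζ equals G ζ
    have hFz : t * ∑' k : ℤ, f (t * k + ζ) = G ζ := by
      rw [hGdef]
      congr 1
      exact tsum_eq_sum fun k hk => rse_vanish hsupp ht0 (by linarith) le_rfl hk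
    -- continuity of G
    have hGc : Continuous G :=
      continuous_const.mul (continuous_finset_sum _ fun k _ =>
        hf.continuous.comp (continuous_const.add continuous_id))
    -- key identity
    have hkey : t * (G ζ - ∫ x : ℝ, f x) = ∫ s in (ζ - t)..ζ, (G ζ - G s) := by
      rw [intervalIntegral.integral_sub (intervalIntegrable_const)
        (hGc.intervalIntegrable _ _), hGint, intervalIntegral.integral_const]
      simp only [smul_eq_mul]
      ring
    have hbound : |∫ s in (ζ - t)..ζ, (G ζ - G s)| ≤ (B * t) * t := by
      have h := intervalIntegral.norm_integral_le_of_norm_le_const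
        (a := ζ - t) (b := ζ) (C := B * t) (f := fun s => G ζ - G s) ?_
      · rw [Real.norm_eq_abs] at h
        calc |∫ s in (ζ - t)..ζ, (G ζ - G s)| ≤ B * t * |ζ - (ζ - t)| := h
          _ = B * t * t := by rw [show ζ - (ζ - t) = t by ring, abs_of_pos ht0]
      · intro s hs
        rw [Set.uIoc_of_le (by linarith)] at hs
        exact hGdiff s ⟨le_of_lt hs.1, hs.2⟩
    have hfinal : |G ζ - ∫ x : ℝ, f x| ≤ B * t := by
      have h1 : t * |G ζ - ∫ x : ℝ, f x| ≤ (B * t) * t := by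
        calc t * |G ζ - ∫ x : ℝ, f x| = |t * (G ζ - ∫ x : ℝ, f x)| := by
              rw [abs_mul, abs_of_pos ht0]
          _ = |∫ s in (ζ - t)..ζ, (G ζ - G s)| := by rw [hkey]
          _ ≤ (B * t) * t := hbound
      nlinarith [abs_nonneg (G ζ - ∫ x : ℝ, f x)]
    rw [hFz]
    calc |G ζ - ∫ x : ℝ, f x| ≤ B * t := hfinal
      _ = 9 * R * t ^ (n + 1) * ⨆ x : ℝ, |iteratedDeriv (n + 1) f x| := by
          rw [hBdef, iteratedDeriv_succ']; ring

theorem riemann_sum_estimate (f : ℝ → ℝ) (hf : ContDiff ℝ (⊤ : ℕ∞) f)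
    (hsupp : HasCompactSupport f) (n : ℕ) :
    ∃ C : ℝ, 0 < C ∧ ∀ t ∈ Set.Ioo (0 : ℝ) 1, ∀ ζ : ℝ,
      |t * ∑' k : ℤ, f (t * k + ζ) - ∫ x : ℝ, f x| ≤
        C * t ^ n * ⨆ x : ℝ, |iteratedDeriv n f x| := by
  obtain ⟨r, hr⟩ := hsupp.isCompact.isBounded.subset_closedBall 0
  set R := max r 1 with hR
  have hR1 : 1 ≤ R := le_max_right _ _
  have hsub : tsupport f ⊆ Set.Icc (-R) R := by
    refine hr.trans ?_
    rw [Real.closedBall_eq_Icc]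
    apply Set.Icc_subset_Icc <;> simp [hR] <;> linarith [le_max_left r 1]
  refine ⟨9 * R, by linarith, ?_⟩
  intro t ht ζ
  exact rse_key R hR1 n f (hf.of_le (by simp)) hsub t ht ζ
end

section
/- For r ∈ (r_w, r_0), one has v_0(r)/r < -2√α_s, and on (0, r_w) one has v_0(r)/r > -2√α_s. Consequently, for any compact subinterval I ⊂ (r_w, r_0) there exists C₂ > 0 with v_0(r)/r + 2√α_s ≤ -2C₂ for all r ∈ I. -/
/-!
With `s = √αs`, the choice of `r_w` is exactly `r_w³ = 16 s r₀ R²`. For `r < r_w` this turns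
`v₀(r)/r + 2s` into `3 (r_w² - r²) / (16 R²) > 0`. For `r > r_w`, `2 s r₀ = r_w³ / (8 R²)` and
`log t < (t³ - 1)/3` bound the logarithmic gain by a quarter of the cubic loss. The uniform
gap on a compact `I` is the maximum of the continuous negative function `v₀(r)/r + 2s` on `I`.
-/

theorem Real.rpow_one_third_pow_three {x : ℝ} (hx : 0 ≤ x) : (x ^ ((1 : ℝ) / 3)) ^ 3 = x := by
  simpa using Real.rpow_inv_natCast_pow hx three_ne_zero

theorem Real.log_lt_pow_three_sub_one_div_three {t : ℝ} (ht : 0 < t) (ht1 : t ≠ 1) :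
    Real.log t < (t ^ 3 - 1) / 3 := by
  have hcube : t ^ 3 ≠ 1 := by rwa [Ne, pow_eq_one_iff_of_nonneg ht.le three_ne_zero]
  have := Real.log_lt_sub_one_of_pos (pow_pos ht 3) hcube
  rw [Real.log_pow, Nat.cast_ofNat] at this
  linarith

theorem IsCompact.exists_pos_forall_le_neg {α : Type*} [TopologicalSpace α] {I : Set α}
    {f : α → ℝ} (hI : IsCompact I) (hf : ContinuousOn f I) (hneg : ∀ x ∈ I, f x < 0) :
    ∃ ε, 0 < ε ∧ ∀ x ∈ I, f x ≤ -ε := by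
  obtain ⟨ε, hε, hbound⟩ := hI.exists_forall_le' hf.neg fun x hx => neg_pos.mpr (hneg x hx)
  exact ⟨ε, hε, fun x hx => le_neg_of_le_neg (hbound x hx)⟩

namespace WrinkledProfile

variable {s r0 R rw r : ℝ}

noncomputable def innerProfile (s r0 R rw r : ℝ) : ℝ :=
  -(3 / 16) * r ^ 3 / R ^ 2 + (2 * s * (r0 / rw - 1) + (1 / 16) * rw ^ 2 / R ^ 2) * r

noncomputable def outerProfile (s r0 R rw r : ℝ) : ℝ :=
  -2 * s * r - (r ^ 3 - rw ^ 3) / (6 * R ^ 2) + 2 * s * r0 * Real.log (r / rw)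

theorem neg_two_mul_lt_innerProfile_div (hR : R ≠ 0) (hcube : rw ^ 3 = 16 * s * r0 * R ^ 2)
    (hr : 0 < r) (hrw : r < rw) : -2 * s < innerProfile s r0 R rw r / r := by
  have hrw0 : rw ≠ 0 := (hr.trans hrw).ne'
  have hgap : innerProfile s r0 R rw r / r + 2 * s = 3 * (rw ^ 2 - r ^ 2) / (16 * R ^ 2) := by
    unfold innerProfile
    field_simp
    linear_combination (-2) * hcube
  have : 0 < 3 * (rw ^ 2 - r ^ 2) / (16 * R ^ 2) := by
    have : r ^ 2 < rw ^ 2 := pow_lt_pow_left₀ hrw hr.le two_ne_zero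
    apply div_pos <;> positivity [sub_pos.2 this]
  linarith

theorem outerProfile_div_lt_neg_two_mul (hR : 0 < R) (hrw : 0 < rw)
    (hcube : rw ^ 3 = 16 * s * r0 * R ^ 2) (hr : rw < r) :
    outerProfile s r0 R rw r / r < -2 * s := by
  have hr0 : 0 < r := hrw.trans hr
  have hcoef : 2 * s * r0 = rw ^ 3 / (8 * R ^ 2) := by
    field_simp
    linear_combination -hcube
  have hlog := Real.log_lt_pow_three_sub_one_div_three (div_pos hr0 hrw) (div_ne_one_of_ne hr.ne')
  have hgain : 2 * s * r0 * Real.log (r / rw) < (r ^ 3 - rw ^ 3) / (24 * R ^ 2) := by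
    calc 2 * s * r0 * Real.log (r / rw)
        < rw ^ 3 / (8 * R ^ 2) * (((r / rw) ^ 3 - 1) / 3) := by
          rw [hcoef]; exact mul_lt_mul_of_pos_left hlog (by positivity)
      _ = (r ^ 3 - rw ^ 3) / (24 * R ^ 2) := by field_simp; ring
  have hloss : 0 < r ^ 3 - rw ^ 3 := sub_pos.2 (pow_lt_pow_left₀ hr hrw.le three_ne_zero)
  have : (r ^ 3 - rw ^ 3) / (24 * R ^ 2) < (r ^ 3 - rw ^ 3) / (6 * R ^ 2) :=
    div_lt_div_of_pos_left hloss (by positivity) (by nlinarith [sq_pos_of_pos hR])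
  rw [div_lt_iff₀ hr0]
  unfold outerProfile
  linarith

theorem continuousOn_outerProfile_div (hrw : rw ≠ 0) :
    ContinuousOn (fun r => outerProfile s r0 R rw r / r + 2 * s) {0}ᶜ := by
  have hlog : ContinuousOn (fun r => Real.log (r / rw)) {0}ᶜ :=
    ContinuousOn.log (by fun_prop) fun x hx => div_ne_zero hx hrw
  unfold outerProfile
  exact ((ContinuousOn.add (by fun_prop) (continuousOn_const.mul hlog)).div continuousOn_id
    fun x hx => hx).add continuousOn_const

end WrinkledProfile

open WrinkledProfile in
theorem v0_strictly_wrinkled_general (αs r0 R rw : ℝ) (hr0 : 0 < r0) (hR : 0 < R)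
    (hαs : 0 < αs)
    (hrw : rw = (16 * Real.sqrt αs * r0 * R ^ 2) ^ ((1 : ℝ) / 3))
    (v0 : ℝ → ℝ)
    (hv0 : ∀ r : ℝ, v0 r = if r ≤ rw then
        -(3 / 16) * r ^ 3 / R ^ 2 +
          (2 * Real.sqrt αs * (r0 / rw - 1) + (1 / 16) * rw ^ 2 / R ^ 2) * r
      else
        -2 * Real.sqrt αs * r - (r ^ 3 - rw ^ 3) / (6 * R ^ 2) +
          2 * Real.sqrt αs * r0 * Real.log (r / rw)) :
    (∀ r ∈ Set.Ioo rw r0, v0 r / r < -2 * Real.sqrt αs) ∧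
    (∀ r ∈ Set.Ioo (0 : ℝ) rw, -2 * Real.sqrt αs < v0 r / r) ∧
    ∀ I : Set ℝ, IsCompact I → I ⊆ Set.Ioo rw r0 →
      ∃ C2 : ℝ, 0 < C2 ∧ ∀ r ∈ I, v0 r / r + 2 * Real.sqrt αs ≤ -2 * C2 := by
  set s := Real.sqrt αs
  have hbase : 0 < 16 * s * r0 * R ^ 2 := by positivity
  have hcube : rw ^ 3 = 16 * s * r0 * R ^ 2 := hrw ▸ Real.rpow_one_third_pow_three hbase.le
  have hrw0 : 0 < rw := hrw ▸ by positivity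
  have hv0_outer : ∀ r, rw < r → v0 r = outerProfile s r0 R rw r := fun r hr => by
    rw [hv0, if_neg hr.not_ge]; rfl
  have houter : ∀ r, rw < r → v0 r / r < -2 * s := fun r hr =>
    hv0_outer r hr ▸ outerProfile_div_lt_neg_two_mul hR hrw0 hcube hr
  refine ⟨fun r hr => houter r hr.1, fun r ⟨hr, hrrw⟩ => ?_, fun I hI hIsub => ?_⟩
  · rw [hv0, if_pos hrrw.le]
    exact neg_two_mul_lt_innerProfile_div hR.ne' hcube hr hrrw
  · have hcont : ContinuousOn (fun r => v0 r / r + 2 * s) I :=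
      (continuousOn_outerProfile_div (s := s) (r0 := r0) (R := R) hrw0.ne').mono
        (fun r hr => (hrw0.trans (hIsub hr).1).ne') |>.congr fun r hr => by
          simp only [hv0_outer r (hIsub hr).1]
    obtain ⟨ε, hε, hbound⟩ := hI.exists_pos_forall_le_neg hcont
      fun r hr => by linarith [houter r (hIsub hr).1]
    exact ⟨ε / 2, half_pos hε, fun r hr => by linarith [hbound r hr]⟩

theorem v0_strictly_wrinkled (αs r0 R rw : ℝ) (hr0 : 0 < r0) (hR : 0 < R)
    (hαs : 0 < αs) (hsmall : αs < (2 : ℝ) ^ (-8 : ℤ) * (r0 / R) ^ 4)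
    (hrw : rw = (16 * Real.sqrt αs * r0 * R ^ 2) ^ ((1 : ℝ) / 3))
    (v0 : ℝ → ℝ)
    (hv0 : ∀ r : ℝ, v0 r = if r ≤ rw then
        -(3 / 16) * r ^ 3 / R ^ 2 +
          (2 * Real.sqrt αs * (r0 / rw - 1) + (1 / 16) * rw ^ 2 / R ^ 2) * r
      else
        -2 * Real.sqrt αs * r - (r ^ 3 - rw ^ 3) / (6 * R ^ 2) +
          2 * Real.sqrt αs * r0 * Real.log (r / rw)) :
    (∀ r ∈ Set.Ioo rw r0, v0 r / r < -2 * Real.sqrt αs) ∧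
    (∀ r ∈ Set.Ioo (0 : ℝ) rw, -2 * Real.sqrt αs < v0 r / r) ∧
    ∀ I : Set ℝ, IsCompact I → I ⊆ Set.Ioo rw r0 →
      ∃ C2 : ℝ, 0 < C2 ∧ ∀ r ∈ I, v0 r / r + 2 * Real.sqrt αs ≤ -2 * C2 :=
  v0_strictly_wrinkled_general αs r0 R rw hr0 hR hαs hrw v0 hv0
end
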